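/- For d = 2, the ideal I of bivariate real polynomials vanishing at the three points (−1,−1), (−1,1), (1,−1) equals the ideal of ℝ[z₁,z₂] generated by the three polynomials ((1+z₁)/2)·((1+z₂)/2), ((1+z₁)/2)·((z₁+z₂)/2), and ((1+z₂)/2)·((z₁+z₂)/2). -/

import Mathlib

/-!
Modulo `J = (g₁, g₂, g₃)` we have `z₁² ≡ 1`, `z₂² ≡ 1` and `(1 + z₁)(1 + z₂) ≡ 0`, so multiplying
by `z₁` or `z₂` preserves the affine polynomials `a + b z₁ + c z₂` modulo `J`, and every polynomial
is congruent to one of them. An affine polynomial vanishing at three affinely independent points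
is zero, so a polynomial vanishing on `Z'` lies in `J`; conversely each `gᵢ` vanishes on `Z'`.
-/

open MvPolynomial

/-- `((1+z₁)/2)·((1+z₂)/2)` -/
noncomputable def g₁ : MvPolynomial (Fin 2) ℝ :=
  (C (1 / 2 : ℝ) * (1 + X 0)) * (C (1 / 2 : ℝ) * (1 + X 1))

/-- `((1+z₁)/2)·((z₁+z₂)/2)` -/
noncomputable def g₂ : MvPolynomial (Fin 2) ℝ :=
  (C (1 / 2 : ℝ) * (1 + X 0)) * (C (1 / 2 : ℝ) * (X 0 + X 1))

/-- `((1+z₂)/2)·((z₁+z₂)/2)` -/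
noncomputable def g₃ : MvPolynomial (Fin 2) ℝ :=
  (C (1 / 2 : ℝ) * (1 + X 1)) * (C (1 / 2 : ℝ) * (X 0 + X 1))

theorem exists_affine_sub_mem {R : Type*} [CommRing R] {J : Ideal (MvPolynomial (Fin 2) R)}
    (h₀ : X 0 ^ 2 - 1 ∈ J) (h₁ : X 1 ^ 2 - 1 ∈ J) (h₀₁ : (1 + X 0) * (1 + X 1) ∈ J)
    (p : MvPolynomial (Fin 2) R) : ∃ a b c : R, p - (C a + C b * X 0 + C c * X 1) ∈ J := by
  induction p using MvPolynomial.induction_on with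
  | C a => exact ⟨a, 0, 0, by simp⟩
  | add p q hp hq =>
    obtain ⟨a, b, c, hp⟩ := hp
    obtain ⟨a', b', c', hq⟩ := hq
    refine ⟨a + a', b + b', c + c', ?_⟩
    convert J.add_mem hp hq using 1
    simp only [map_add]; ring
  | mul_X p i hp =>
    obtain ⟨a, b, c, hp⟩ := hp
    obtain rfl | rfl : i = 0 ∨ i = 1 := by omega
    -- `z₁ z₂ ≡ -1 - z₁ - z₂` and `zᵢ² ≡ 1` make `zᵢ (a + b z₁ + c z₂)` affine again
    · refine ⟨b - c, a - c, -c, ?_⟩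
      convert J.add_mem (J.add_mem (J.mul_mem_right (X 0) hp) (J.mul_mem_left (C b) h₀))
        (J.mul_mem_left (C c) h₀₁) using 1
      simp only [map_sub, map_neg]; ring
    · refine ⟨c - b, -b, a - b, ?_⟩
      convert J.add_mem (J.add_mem (J.mul_mem_right (X 1) hp) (J.mul_mem_left (C c) h₁))
        (J.mul_mem_left (C b) h₀₁) using 1
      simp only [map_sub, map_neg]; ring

lemma four_mul_C_half_sq {σ : Type*} : (4 : MvPolynomial σ ℝ) * C (1 / 2) ^ 2 = 1 := by
  rw [← map_ofNat C 4, ← C_pow, ← C_mul]; norm_num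

lemma g₁_mem_span : g₁ ∈ Ideal.span {g₁, g₂, g₃} := Ideal.subset_span (by simp)

lemma g₂_mem_span : g₂ ∈ Ideal.span {g₁, g₂, g₃} := Ideal.subset_span (by simp)

lemma g₃_mem_span : g₃ ∈ Ideal.span {g₁, g₂, g₃} := Ideal.subset_span (by simp)

lemma X_zero_sq_sub_one_mem_span : X 0 ^ 2 - 1 ∈ Ideal.span {g₁, g₂, g₃} := by
  have h : (X 0 ^ 2 - 1 : MvPolynomial (Fin 2) ℝ) = 4 * (g₂ - g₁) := by
    unfold g₁ g₂
    linear_combination (1 - X 0 ^ 2 : MvPolynomial (Fin 2) ℝ) * four_mul_C_half_sq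
  rw [h]
  exact Ideal.mul_mem_left _ _ (sub_mem g₂_mem_span g₁_mem_span)

lemma X_one_sq_sub_one_mem_span : X 1 ^ 2 - 1 ∈ Ideal.span {g₁, g₂, g₃} := by
  have h : (X 1 ^ 2 - 1 : MvPolynomial (Fin 2) ℝ) = 4 * (g₃ - g₁) := by
    unfold g₁ g₃
    linear_combination (1 - X 1 ^ 2 : MvPolynomial (Fin 2) ℝ) * four_mul_C_half_sq
  rw [h]
  exact Ideal.mul_mem_left _ _ (sub_mem g₃_mem_span g₁_mem_span)

lemma one_add_X_mul_one_add_X_mem_span :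
    (1 + X 0) * (1 + X 1) ∈ Ideal.span {g₁, g₂, g₃} := by
  have h : ((1 + X 0) * (1 + X 1) : MvPolynomial (Fin 2) ℝ) = 4 * g₁ := by
    unfold g₁
    linear_combination (-(1 + X 0) * (1 + X 1) : MvPolynomial (Fin 2) ℝ) * four_mul_C_half_sq
  rw [h]
  exact Ideal.mul_mem_left _ _ g₁_mem_span

def Z' : Set (Fin 2 → ℝ) := {![-1, -1], ![-1, 1], ![1, -1]}

lemma span_le_vanishingIdeal_Z' : Ideal.span {g₁, g₂, g₃} ≤ vanishingIdeal ℝ Z' := by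
  rw [Ideal.span_le]
  rintro g hg ε hε
  simp only [Z', Set.mem_insert_iff, Set.mem_singleton_iff] at hg hε
  rcases hg with rfl | rfl | rfl <;> rcases hε with rfl | rfl | rfl <;> simp [g₁, g₂, g₃]

lemma eq_zero_of_affine_mem_vanishingIdeal_Z' {a b c : ℝ}
    (h : C a + C b * X 0 + C c * X 1 ∈ vanishingIdeal ℝ Z') : a = 0 ∧ b = 0 ∧ c = 0 := by
  have e₁ := h ![-1, -1] (by simp [Z'])
  have e₂ := h ![-1, 1] (by simp [Z'])
  have e₃ := h ![1, -1] (by simp [Z'])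
  simp only [map_add, map_mul, aeval_C, aeval_X, Algebra.algebraMap_self, RingHom.id_apply,
    Matrix.cons_val_zero, Matrix.cons_val_one] at e₁ e₂ e₃
  exact ⟨by linarith, by linarith, by linarith⟩

theorem vanishingIdeal_Z'_eq_span : vanishingIdeal ℝ Z' = Ideal.span {g₁, g₂, g₃} := by
  refine le_antisymm (fun p hp ↦ ?_) span_le_vanishingIdeal_Z'
  obtain ⟨a, b, c, hq⟩ := exists_affine_sub_mem X_zero_sq_sub_one_mem_span
    X_one_sq_sub_one_mem_span one_add_X_mul_one_add_X_mem_span p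
  have hq' : C a + C b * X 0 + C c * X 1 ∈ vanishingIdeal ℝ Z' := by
    simpa using sub_mem hp (span_le_vanishingIdeal_Z' hq)
  obtain ⟨rfl, rfl, rfl⟩ := eq_zero_of_affine_mem_vanishingIdeal_Z' hq'
  simpa using hq

/-- The ideal of bivariate real polynomials vanishing at `(-1,-1)`, `(-1,1)`, `(1,-1)`
equals the ideal generated by `g₁`, `g₂`, `g₃`. -/
theorem stmt_0 (p : MvPolynomial (Fin 2) ℝ) :
    (∀ ε : Fin 2 → ℝ, ε ∈ ({![-1, -1], ![-1, 1], ![1, -1]} : Set (Fin 2 → ℝ)) →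
      eval ε p = 0) ↔ p ∈ Ideal.span ({g₁, g₂, g₃} : Set (MvPolynomial (Fin 2) ℝ)) := by
  rw [← vanishingIdeal_Z'_eq_span]
  rfl
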